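/- Let A ∈ Mat_N(ℤ) be diagonalizable whose eigenvalues have exactly two distinct moduli |λ| > |μ|, with nonzero determinant, and let A' = |det A|·A^{-1}. Then for all P ∈ 𝔾_m^N(ℚ̄), ĥ_A(P) := ĥ_A⁺(P) + ĥ_{A'}⁺(P) ≥ h(P). -/

import Mathlib

open Filter NumberField IsDedekindDomain
open scoped Classical

noncomputable section

/-- The logarithm of the normalized absolute value of `a` at the finite place `v` of the
number field `K`:  `log ‖a‖_v = -(additive valuation of a) * log (norm of v)`. -/
def finVal (K : Type*) [Field K] [NumberField K]
    (v : HeightOneSpectrum (𝓞 K)) (a : K) : ℝ :=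
  if h : a = 0 then 0
  else (Multiplicative.toAdd (WithZero.unzero ((v.valuation K).ne_zero_iff.mpr h)) : ℤ) *
    Real.log (Ideal.absNorm v.asIdeal)

/-- The absolute logarithmic Weil height of a tuple of elements of a number field `K`:
`h(P) = Σ_{v ∈ M_K} max {0, log ‖x₁‖_v, …, log ‖x_N‖_v}` with suitably normalized
absolute values. -/
def logHeight (K : Type*) [Field K] [NumberField K] {N : ℕ} (x : Fin N → K) : ℝ :=
  (Module.finrank ℚ K : ℝ)⁻¹ *
    ((∑ w : InfinitePlace K, (w.mult : ℝ) * ⨆ i, max 0 (Real.log (w (x i)))) +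
     ∑ᶠ v : HeightOneSpectrum (𝓞 K), ⨆ i, max 0 (finVal K v (x i)))

/-- The height of a point of `𝔾_m^N(K)`. -/
def uHeight (K : Type*) [Field K] [NumberField K] {N : ℕ} (x : Fin N → Kˣ) : ℝ :=
  logHeight K (fun i => (x i : K))

/-- The monomial map associated to an integer matrix `A`:
`φ_A(x₁,…,x_N) = (∏ x_j^{a_{1j}}, …, ∏ x_j^{a_{Nj}})`. -/
def phi {G : Type*} [CommGroup G] {N : ℕ} (A : Matrix (Fin N) (Fin N) ℤ)
    (x : Fin N → G) : Fin N → G :=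
  fun i => ∏ j, (x j) ^ (A i j)

/-! Write `A = B diag(λ) B⁻¹` and let `α = B diag(𝟙[|λ_k| = rl]) B⁻¹` and `β = 1 - α` be the
spectral projections. The height of `φ_M(P)` is `Σ_v max_i {0, (M · log‖P‖_v)_i}`, an expression
that makes sense for every real matrix `M` and is continuous, positively homogeneous and
subadditive in `M`. The eigenvalues `|det A| / λ_k` of `A'` have modulus `δ_{A'} · rm / |λ_k|`,
which is `≤ δ_{A'}` with equality iff `|λ_k| = rm`. Along a subsequence on which all the angles
`λ_k / |λ_k|` return close to `1` we therefore get `A^n / rl^n → α` and `A'^n / δ_{A'}^n → β`.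
Hence `ĥ_A⁺(P) ≥ h_α(P)`, `ĥ_{A'}⁺(P) ≥ h_β(P)`, and `h(P) = h_{α+β}(P) ≤ h_α(P) + h_β(P)`. -/

open Topology

section MonomialMap
variable {G : Type*} [CommGroup G] {N : ℕ}

theorem phi_mul (A B : Matrix (Fin N) (Fin N) ℤ) (x : Fin N → G) :
    phi (A * B) x = phi A (phi B x) := by
  funext i
  apply Additive.ofMul.injective
  simp only [phi, Matrix.mul_apply, ofMul_prod, ofMul_zpow, Finset.sum_smul, Finset.smul_sum,
    mul_smul]
  exact Finset.sum_comm

theorem phi_one (x : Fin N → G) : phi 1 x = x := by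
  funext i
  simp [phi, Matrix.one_apply]

theorem iterate_phi (A : Matrix (Fin N) (Fin N) ℤ) (n : ℕ) (x : Fin N → G) :
    (phi A)^[n] x = phi (A ^ n) x := by
  induction n with
  | zero => simp [phi_one]
  | succ n ih => rw [Function.iterate_succ_apply', ih, ← phi_mul, ← pow_succ']

end MonomialMap

theorem Finset.prod_eq_pow_card_mul_pow_of_forall_eq_or_eq {ι M : Type*} [Fintype ι]
    [CommMonoid M] [DecidableEq M] {f : ι → M} {a b : M} (h : ∀ i, f i = a ∨ f i = b) :
    ∏ i, f i = a ^ (Finset.univ.filter fun i => f i = a).card *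
      b ^ (Fintype.card ι - (Finset.univ.filter fun i => f i = a).card) := by
  rw [← Finset.prod_filter_mul_prod_filter_not Finset.univ (fun i => f i = a),
    Finset.prod_eq_pow_card (fun i hi => (Finset.mem_filter.1 hi).2),
    Finset.prod_eq_pow_card (fun i hi => (h i).resolve_left (Finset.mem_filter.1 hi).2)]
  congr 2
  have := Finset.card_filter_add_card_filter_not (s := Finset.univ) (fun i => f i = a)
  rw [Finset.card_univ] at this
  omega

section Diagonalizable
variable {n 𝕜 : Type*} [Fintype n] [DecidableEq n] [Field 𝕜] {B : Matrix n n 𝕜}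

open Matrix

theorem conj_diagonal_pow (hB : IsUnit B.det) (d : n → 𝕜) (k : ℕ) :
    (B * diagonal d * B⁻¹) ^ k = B * diagonal (d ^ k) * B⁻¹ := by
  rw [← diagonal_pow]
  exact Units.conj_pow (nonsingInvUnit B hB) (diagonal d) k

theorem conj_diagonal_mul_conj_diagonal (hB : IsUnit B.det) (d e : n → 𝕜) :
    B * diagonal d * B⁻¹ * (B * diagonal e * B⁻¹) =
      B * diagonal (fun k => d k * e k) * B⁻¹ := by
  rw [← diagonal_mul_diagonal]
  simp only [Matrix.mul_assoc, ← Matrix.mul_assoc B⁻¹ B, nonsing_inv_mul B hB, Matrix.one_mul]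

theorem eq_conj_diagonal_of_mul_eq_smul_one (hB : IsUnit B.det) {d : n → 𝕜} (hd : ∀ k, d k ≠ 0)
    {Y : Matrix n n 𝕜} {c : 𝕜} (hY : B * diagonal d * B⁻¹ * Y = c • 1) :
    Y = B * diagonal (fun k => c / d k) * B⁻¹ := by
  have hX : IsUnit (B * diagonal d * B⁻¹) := by
    rw [isUnit_iff_isUnit_det, det_conj ((isUnit_iff_isUnit_det B).2 hB), det_diagonal]
    exact (Finset.prod_ne_zero_iff.2 fun k _ => hd k).isUnit
  refine hX.mul_left_cancel (hY.trans ?_)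
  rw [conj_diagonal_mul_conj_diagonal hB]
  simp only [mul_div_cancel₀ c (hd _)]
  rw [← smul_one_eq_diagonal, Matrix.mul_smul, Matrix.smul_mul, Matrix.mul_one,
    mul_nonsing_inv B hB]

theorem conj_diagonal_ite_add_ite_not (hB : IsUnit B.det) (p : n → Prop) [DecidablePred p] :
    B * diagonal (fun k => if p k then 1 else 0) * B⁻¹ +
      B * diagonal (fun k => if p k then 0 else 1) * B⁻¹ = 1 := by
  have h : ∀ k, (if p k then (1 : 𝕜) else 0) + (if p k then 0 else 1) = 1 := fun k => by
    by_cases hk : p k <;> simp [hk]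
  rw [← Matrix.add_mul, ← Matrix.mul_add, diagonal_add]
  simp only [h, diagonal_one, Matrix.mul_one, mul_nonsing_inv B hB]

end Diagonalizable

section IntegerDiagonalizable
variable {n : Type*} [Fintype n] [DecidableEq n] {A : Matrix n n ℤ} {B : Matrix n n ℂ}
  {d : n → ℂ}

open Matrix

theorem smul_map_intCast_pow_eq_map_re (hB : IsUnit B.det)
    (hA : A.map (Int.cast : ℤ → ℂ) = B * diagonal d * B⁻¹) (c : ℝ) (k : ℕ) :
    c ^ k • (A ^ k).map (Int.cast : ℤ → ℝ) =
      (B * diagonal (fun i => (c * d i) ^ k) * B⁻¹).map Complex.re := by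
  have hpow : (A ^ k).map (Int.cast : ℤ → ℂ) = B * diagonal (d ^ k) * B⁻¹ := by
    rw [← conj_diagonal_pow hB, ← hA]
    simpa using Matrix.map_pow A (Int.castRingHom ℂ) k
  have hscale : B * diagonal (fun i => (c * d i) ^ k) * B⁻¹ =
      ((c : ℂ) ^ k) • (A ^ k).map (Int.cast : ℤ → ℂ) := by
    rw [hpow, ← Matrix.smul_mul, ← Matrix.mul_smul, ← diagonal_smul]
    congr 3
    funext i
    simp [mul_pow]
  ext i j
  rw [hscale]
  simp [← Complex.ofReal_pow]

theorem abs_det_eq_prod_norm (hB : IsUnit B.det)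
    (hA : A.map (Int.cast : ℤ → ℂ) = B * diagonal d * B⁻¹) :
    ((|A.det| : ℤ) : ℝ) = ∏ k, ‖d k‖ := by
  have hdet : (A.det : ℂ) = ∏ k, d k := by
    rw [← det_diagonal, ← det_conj ((isUnit_iff_isUnit_det B).2 hB), ← hA]
    simpa using RingHom.map_det (Int.castRingHom ℂ) A
  rw [Int.cast_abs, ← Complex.norm_intCast, hdet, norm_prod]

theorem map_sign_smul_adjugate (hB : IsUnit B.det) (hd : ∀ k, d k ≠ 0)
    (hA : A.map (Int.cast : ℤ → ℂ) = B * diagonal d * B⁻¹) :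
    (A.det.sign • A.adjugate).map (Int.cast : ℤ → ℂ) =
      B * diagonal (fun k => ((|A.det| : ℤ) : ℂ) / d k) * B⁻¹ := by
  refine eq_conj_diagonal_of_mul_eq_smul_one hB hd ?_
  have hmul : A * (A.det.sign • A.adjugate) = |A.det| • 1 := by
    rw [Matrix.mul_smul, mul_adjugate, smul_smul, Int.sign_mul_self_eq_abs]
  rw [← hA]
  refine (Matrix.map_mul (f := Int.castRingHom ℂ)).symm.trans ?_
  rw [hmul]
  ext i j
  simp only [Matrix.map_apply, Matrix.smul_apply, Matrix.one_apply, smul_eq_mul]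
  split_ifs <;> simp

end IntegerDiagonalizable

theorem mapClusterPt_pow_of_norm_le_one {ι : Type*} [Finite ι] {z : ι → ℂ}
    (hz : ∀ k, ‖z k‖ ≤ 1) :
    MapClusterPt (fun k => if ‖z k‖ = 1 then 1 else 0) atTop (fun n k => z k ^ n) := by
  -- `z k = ‖z k‖ * exp (arg (z k) * I)`: the angular parts return to `1` along a subsequence
  -- (recurrence in the compact group `ι → Circle`), while the radial parts converge.
  obtain ⟨ψ, hψ, hrot⟩ :=
    (mapClusterPt_one_atTop_pow fun k => Circle.exp (z k).arg).tendsto_subseq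
  refine (tendsto_pi_nhds.2 fun k => ?_).mapClusterPt.of_comp hψ.tendsto_atTop
  have hrot_k : Tendsto (fun m => Complex.exp ((z k).arg * Complex.I) ^ ψ m) atTop (𝓝 1) := by
    have : Tendsto (fun m => ((Circle.exp (z k).arg ^ ψ m : Circle) : ℂ)) atTop
        (𝓝 ((1 : Circle) : ℂ)) :=
      (continuous_subtype_val.tendsto 1).comp (((continuous_apply k).tendsto _).comp hrot)
    simpa [Circle.coe_exp] using this
  have hrad : Tendsto (fun m => ((‖z k‖ ^ ψ m : ℝ) : ℂ)) atTop
      (𝓝 (if ‖z k‖ = 1 then 1 else 0)) := by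
    rcases (hz k).eq_or_lt with h | h
    · simp [h]
    · rw [if_neg h.ne, ← Complex.ofReal_zero]
      exact Complex.continuous_ofReal.tendsto _ |>.comp <|
        (tendsto_pow_atTop_nhds_zero_of_lt_one (norm_nonneg _) h).comp hψ.tendsto_atTop
  simpa [← mul_pow, Complex.norm_mul_exp_arg_mul_I] using hrad.mul hrot_k

theorem le_limsup_of_mapClusterPt {α X : Type*} [TopologicalSpace X] {l : Filter α}
    {Φ : X → ℝ} (hΦ : Continuous Φ) {s : Set X} (hs : IsCompact s) {u : α → X}
    (hu : ∀ a, u a ∈ s) {e : X} (he : MapClusterPt e l u) :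
    Φ e ≤ limsup (fun a => Φ (u a)) l := by
  obtain ⟨C, hC⟩ := hs.bddAbove_image hΦ.continuousOn
  exact (he.continuousAt_comp hΦ.continuousAt).le_limsup
    (isBoundedUnder_of ⟨C, fun a => hC ⟨u a, hu a, rfl⟩⟩)

section SupPosMulVec
variable {m n : Type*} [Fintype n]

def supPosMulVec (M : Matrix m n ℝ) (L : n → ℝ) : ℝ :=
  ⨆ i, max 0 ((M.mulVec L) i)

theorem le_supPosMulVec [Finite m] (M : Matrix m n ℝ) (L : n → ℝ) (i : m) :
    max 0 ((M.mulVec L) i) ≤ supPosMulVec M L :=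
  le_ciSup (f := fun i => max 0 ((M.mulVec L) i)) (Finite.bddAbove_range _) i

theorem supPosMulVec_nonneg (M : Matrix m n ℝ) (L : n → ℝ) : 0 ≤ supPosMulVec M L :=
  Real.iSup_nonneg fun _ => le_max_left _ _

theorem supPosMulVec_add_le [Finite m] (M₁ M₂ : Matrix m n ℝ) (L : n → ℝ) :
    supPosMulVec (M₁ + M₂) L ≤ supPosMulVec M₁ L + supPosMulVec M₂ L := by
  refine Real.iSup_le (fun i => max_le ?_ ?_)
    (add_nonneg (supPosMulVec_nonneg _ _) (supPosMulVec_nonneg _ _))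
  · exact add_nonneg (supPosMulVec_nonneg _ _) (supPosMulVec_nonneg _ _)
  · rw [Matrix.add_mulVec, Pi.add_apply]
    exact add_le_add ((le_max_right _ _).trans (le_supPosMulVec _ _ i))
      ((le_max_right _ _).trans (le_supPosMulVec _ _ i))

theorem supPosMulVec_smul {r : ℝ} (hr : 0 ≤ r) (M : Matrix m n ℝ) (L : n → ℝ) :
    supPosMulVec (r • M) L = r * supPosMulVec M L := by
  simp only [supPosMulVec, Real.mul_iSup_of_nonneg hr, mul_max_of_nonneg _ _ hr, mul_zero,
    Matrix.smul_mulVec, Pi.smul_apply, smul_eq_mul]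

theorem supPosMulVec_zero_right (M : Matrix m n ℝ) : supPosMulVec M 0 = 0 := by
  simp [supPosMulVec]

theorem continuous_supPosMulVec [Finite m] (L : n → ℝ) :
    Continuous fun M : Matrix m n ℝ => supPosMulVec M L := by
  have := Fintype.ofFinite m
  rcases isEmpty_or_nonempty m with hm | hm
  · simp only [supPosMulVec, Real.iSup_of_isEmpty]
    exact continuous_const
  · simp only [supPosMulVec, ← Finset.sup'_univ_eq_ciSup]
    refine Continuous.finset_sup'_apply _ fun i _ => continuous_const.max ?_
    fun_prop

end SupPosMulVec

section LogAbs
variable {K : Type*} [Field K] {F : Type*} [FunLike F K ℝ] [MonoidWithZeroHomClass F K ℝ]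
  {N : ℕ}

theorem log_apply_phi (f : F) (M : Matrix (Fin N) (Fin N) ℤ) (x : Fin N → Kˣ) (i : Fin N) :
    Real.log (f ((phi M x i : Kˣ) : K)) =
      (M.map (Int.cast : ℤ → ℝ)).mulVec (fun j => Real.log (f (x j : K))) i := by
  have hf : ∀ y : Kˣ, f (y : K) ≠ 0 := fun y => (map_ne_zero f).2 y.ne_zero
  simp only [phi, Units.coe_prod, Units.val_zpow_eq_zpow_val, map_prod, map_zpow₀,
    Matrix.mulVec, dotProduct, Matrix.map_apply]
  rw [Real.log_prod fun j _ => zpow_ne_zero _ (hf _)]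
  simp [Real.log_zpow]

end LogAbs

theorem finVal_eq_log (K : Type*) [Field K] [NumberField K] (v : HeightOneSpectrum (𝓞 K))
    (a : K) : finVal K v a = Real.log (FinitePlace.mk v a) := by
  by_cases ha : a = 0
  · simp [finVal, ha]
  · rw [finVal, dif_neg ha, FinitePlace.mk_apply, FinitePlace.norm_embedding',
      WithZeroMulInt.toNNReal_neg_apply _ ((v.valuation K).ne_zero_iff.mpr ha)]
    simp [Real.log_zpow]

section HeightAlong
variable (K : Type*) [Field K] [NumberField K] {N : ℕ}

def heightAlong (x : Fin N → Kˣ) (M : Matrix (Fin N) (Fin N) ℝ) : ℝ :=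
  (Module.finrank ℚ K : ℝ)⁻¹ *
    ((∑ w : InfinitePlace K, (w.mult : ℝ) * supPosMulVec M (fun j => Real.log (w (x j : K)))) +
     ∑ᶠ v : HeightOneSpectrum (𝓞 K),
       supPosMulVec M (fun j => Real.log (FinitePlace.mk v (x j : K))))

theorem uHeight_phi (M : Matrix (Fin N) (Fin N) ℤ) (x : Fin N → Kˣ) :
    uHeight K (phi M x) = heightAlong K x (M.map (Int.cast : ℤ → ℝ)) := by
  simp only [uHeight, logHeight, heightAlong, supPosMulVec, finVal_eq_log, log_apply_phi]

theorem uHeight_eq_heightAlong_one (x : Fin N → Kˣ) : uHeight K x = heightAlong K x 1 := by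
  simp only [uHeight, logHeight, heightAlong, supPosMulVec, finVal_eq_log, Matrix.one_mulVec]

theorem exists_finset_finitePlace_eq_one (x : Fin N → Kˣ) :
    ∃ S : Finset (HeightOneSpectrum (𝓞 K)), ∀ v ∉ S, ∀ j, FinitePlace.mk v (x j : K) = 1 := by
  have hfin : ∀ j, {v : HeightOneSpectrum (𝓞 K) | FinitePlace.mk v (x j : K) ≠ 1}.Finite :=
    fun j => (FinitePlace.hasFiniteMulSupport (x j).ne_zero).preimage
      FinitePlace.equivHeightOneSpectrum.symm.injective.injOn
  refine ⟨(Set.finite_iUnion hfin).toFinset, fun v hv j => ?_⟩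
  by_contra h
  exact hv ((Set.finite_iUnion hfin).mem_toFinset.2 (Set.mem_iUnion.2 ⟨j, h⟩))

theorem heightAlong_eq_sum (x : Fin N → Kˣ) {S : Finset (HeightOneSpectrum (𝓞 K))}
    (hS : ∀ v ∉ S, ∀ j, FinitePlace.mk v (x j : K) = 1) (M : Matrix (Fin N) (Fin N) ℝ) :
    heightAlong K x M = (Module.finrank ℚ K : ℝ)⁻¹ *
      ((∑ w : InfinitePlace K, (w.mult : ℝ) * supPosMulVec M (fun j => Real.log (w (x j : K)))) +
       ∑ v ∈ S, supPosMulVec M (fun j => Real.log (FinitePlace.mk v (x j : K)))) := by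
  rw [heightAlong, finsum_eq_sum_of_support_subset]
  intro v hv
  by_contra hvS
  refine hv ?_
  simp only [hS v hvS, Real.log_one]
  exact supPosMulVec_zero_right M

theorem heightAlong_add_le (x : Fin N → Kˣ) (M₁ M₂ : Matrix (Fin N) (Fin N) ℝ) :
    heightAlong K x (M₁ + M₂) ≤ heightAlong K x M₁ + heightAlong K x M₂ := by
  obtain ⟨S, hS⟩ := exists_finset_finitePlace_eq_one K x
  simp only [heightAlong_eq_sum K x hS, ← mul_add, add_add_add_comm _ (∑ v ∈ S, _),
    ← Finset.sum_add_distrib]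
  gcongr <;> exact supPosMulVec_add_le _ _ _

theorem heightAlong_smul (x : Fin N → Kˣ) {r : ℝ} (hr : 0 ≤ r) (M : Matrix (Fin N) (Fin N) ℝ) :
    heightAlong K x (r • M) = r * heightAlong K x M := by
  obtain ⟨S, hS⟩ := exists_finset_finitePlace_eq_one K x
  simp only [heightAlong_eq_sum K x hS, supPosMulVec_smul hr, mul_left_comm _ r,
    ← Finset.mul_sum, ← mul_add]

theorem continuous_heightAlong (x : Fin N → Kˣ) : Continuous (heightAlong K x) := by
  obtain ⟨S, hS⟩ := exists_finset_finitePlace_eq_one K x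
  simp only [funext (heightAlong_eq_sum K x hS)]
  have := fun L : Fin N → ℝ => continuous_supPosMulVec (m := Fin N) L
  fun_prop

end HeightAlong

theorem heightAlong_spectralProjection_le_limsup (K : Type*) [Field K] [NumberField K] {N : ℕ}
    {Z : Matrix (Fin N) (Fin N) ℤ} {B : Matrix (Fin N) (Fin N) ℂ} (hB : IsUnit B.det)
    {d : Fin N → ℂ} (hZ : Z.map (Int.cast : ℤ → ℂ) = B * Matrix.diagonal d * B⁻¹) {r : ℝ}
    (hr : 0 < r) (hd : ∀ k, ‖d k‖ ≤ r) (P : Fin N → Kˣ) :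
    heightAlong K P
        ((B * Matrix.diagonal (fun k => if ‖d k‖ = r then 1 else 0) * B⁻¹).map Complex.re) ≤
      limsup (fun n : ℕ => uHeight K ((phi Z)^[n] P) / r ^ n) atTop := by
  set Φ : (Fin N → ℂ) → ℝ :=
    fun e => heightAlong K P ((B * Matrix.diagonal e * B⁻¹).map Complex.re)
  have hΦ : Continuous Φ := (continuous_heightAlong K P).comp (by fun_prop)
  have hseq : ∀ n : ℕ,
      uHeight K ((phi Z)^[n] P) / r ^ n = Φ (fun k => ((r⁻¹ : ℝ) * d k) ^ n) := by
    intro n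
    rw [iterate_phi, uHeight_phi, div_eq_inv_mul, ← inv_pow,
      ← heightAlong_smul K P (by positivity), smul_map_intCast_pow_eq_map_re hB hZ]
  have hnorm : ∀ k, ‖((r⁻¹ : ℝ) : ℂ) * d k‖ = ‖d k‖ / r := fun k => by
    rw [norm_mul, Complex.norm_real, Real.norm_of_nonneg (inv_nonneg.2 hr.le), inv_mul_eq_div]
  have hz : ∀ k, ‖((r⁻¹ : ℝ) : ℂ) * d k‖ ≤ 1 := fun k => by
    rw [hnorm, div_le_one hr]; exact hd k
  have hlim : (fun k => if ‖d k‖ = r then (1 : ℂ) else 0) =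
      fun k => if ‖((r⁻¹ : ℝ) : ℂ) * d k‖ = 1 then 1 else 0 := by
    simp only [hnorm, div_eq_one_iff_eq hr.ne']
  simp only [hseq, hlim]
  refine le_limsup_of_mapClusterPt hΦ (isCompact_univ_pi fun _ => isCompact_closedBall 0 1)
    (fun n k _ => ?_) (mapClusterPt_pow_of_norm_le_one hz)
  simpa using pow_le_one₀ (norm_nonneg _) (hz k)

theorem heightAlong_spectralProjection_compl_le_limsup_adjugate (K : Type*) [Field K]
    [NumberField K] {N : ℕ}
    {A : Matrix (Fin N) (Fin N) ℤ} {B : Matrix (Fin N) (Fin N) ℂ} (hB : IsUnit B.det)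
    {lam : Fin N → ℂ} (hdiag : A.map (Int.cast : ℤ → ℂ) = B * Matrix.diagonal lam * B⁻¹)
    {rl rm : ℝ} (hlt : rm < rl) (hm0 : 0 < rm) (hmod : ∀ i, ‖lam i‖ = rl ∨ ‖lam i‖ = rm)
    (hex : ∃ i, ‖lam i‖ = rm) (P : Fin N → Kˣ) :
    heightAlong K P
        ((B * Matrix.diagonal (fun k => if ‖lam k‖ = rl then 0 else 1) * B⁻¹).map Complex.re) ≤
      limsup (fun n : ℕ => uHeight K ((phi (A.det.sign • A.adjugate))^[n] P) /
        (rl ^ (Finset.univ.filter fun i => ‖lam i‖ = rl).card *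
          rm ^ (N - (Finset.univ.filter fun i => ‖lam i‖ = rl).card - 1)) ^ n) atTop := by
  obtain ⟨im, him⟩ := hex
  set i₀ := (Finset.univ.filter fun i => ‖lam i‖ = rl).card
  set δ := rl ^ i₀ * rm ^ (N - i₀ - 1)
  have hδ : 0 < δ := by have := hm0.trans hlt; positivity
  have hi₀ : i₀ < N := by
    simpa using Finset.card_lt_univ_of_notMem (x := im) (by simp [him, hlt.ne])
  have hdet : ((|A.det| : ℤ) : ℝ) = δ * rm := by
    rw [abs_det_eq_prod_norm hB hdiag, Finset.prod_eq_pow_card_mul_pow_of_forall_eq_or_eq hmod,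
      Fintype.card_fin, mul_assoc, ← pow_succ, Nat.sub_add_cancel (by omega)]
  have hlam : ∀ k, rm ≤ ‖lam k‖ := fun k => by rcases hmod k with h | h <;> linarith
  -- so the eigenvalue `|det A| / λ_k` of `A'` has modulus `≤ δ`, with equality iff `‖λ_k‖ = rm`
  have hnorm : ∀ k, ‖((|A.det| : ℤ) : ℂ) / lam k‖ = δ * (rm / ‖lam k‖) := fun k => by
    rw [norm_div, Complex.norm_intCast, Int.cast_abs, abs_abs, ← Int.cast_abs, hdet, mul_div_assoc]
  convert heightAlong_spectralProjection_le_limsup K hB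
    (map_sign_smul_adjugate hB (fun k => norm_pos_iff.1 (hm0.trans_le (hlam k))) hdiag) hδ
    (fun k => ?_) P using 7 with k
  · have hk : ‖lam k‖ = rl ↔ ¬ rm / ‖lam k‖ = 1 := by
      rw [div_eq_one_iff_eq (hm0.trans_le (hlam k)).ne']
      rcases hmod k with h | h <;> simp [h, hlt.ne]
    simp only [hnorm, mul_eq_left₀ hδ.ne', hk, ite_not]
  · rw [hnorm]
    exact mul_le_of_le_one_right hδ.le ((div_le_one (hm0.trans_le (hlam k))).2 (hlam k))

theorem statement13_general {N : ℕ} (A : Matrix (Fin N) (Fin N) ℤ)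
    (B : Matrix (Fin N) (Fin N) ℂ) (hB : IsUnit B.det) (lam : Fin N → ℂ)
    (hdiag : A.map (Int.cast : ℤ → ℂ) = B * Matrix.diagonal lam * B⁻¹)
    (rl rm : ℝ) (hlt : rm < rl) (hm0 : 0 < rm)
    (hmod : ∀ i, ‖lam i‖ = rl ∨ ‖lam i‖ = rm)
    (hex2 : ∃ i, ‖lam i‖ = rm)
    (K : Type*) [Field K] [NumberField K] (P : Fin N → Kˣ) :
    uHeight K P ≤
      Filter.limsup (fun n : ℕ => uHeight K ((phi A)^[n] P) / rl ^ n) Filter.atTop +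
      Filter.limsup
        (fun n : ℕ =>
          uHeight K ((phi (A.det.sign • A.adjugate))^[n] P) /
            (rl ^ ((Finset.univ.filter fun i => ‖lam i‖ = rl).card) *
              rm ^ (N - (Finset.univ.filter fun i => ‖lam i‖ = rl).card - 1)) ^ n)
        Filter.atTop := by
  set α := B * Matrix.diagonal (fun k => if ‖lam k‖ = rl then 1 else 0) * B⁻¹
  set β := B * Matrix.diagonal (fun k => if ‖lam k‖ = rl then 0 else 1) * B⁻¹
  have hαβ : α.map Complex.re + β.map Complex.re = 1 := by
    rw [← Matrix.map_add _ Complex.add_re, conj_diagonal_ite_add_ite_not hB,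
      Matrix.map_one _ Complex.zero_re Complex.one_re]
  calc uHeight K P = heightAlong K P (α.map Complex.re + β.map Complex.re) := by
        rw [hαβ, uHeight_eq_heightAlong_one]
    _ ≤ heightAlong K P (α.map Complex.re) + heightAlong K P (β.map Complex.re) :=
        heightAlong_add_le K P _ _
    _ ≤ _ := add_le_add
        (heightAlong_spectralProjection_le_limsup K hB hdiag (hm0.trans hlt)
          (fun k => by rcases hmod k with h | h <;> linarith) P)
        (heightAlong_spectralProjection_compl_le_limsup_adjugate K hB hdiag hlt hm0 hmod hex2 P)

/-- If A is diagonalizable with eigenvalues of exactly two moduli rl > rm > 0, and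
A' = |det A|·A⁻¹ = sgn(det A)·adjugate(A), then the total canonical height
ĥ_A(P) = ĥ_A⁺(P) + ĥ_{A'}⁺(P) satisfies ĥ_A(P) ≥ h(P), where
δ_A = rl and δ_{A'} = rl^{i₀}·rm^{N-i₀-1} with i₀ the number of eigenvalues of modulus rl. -/
theorem statement13 {N : ℕ} (A : Matrix (Fin N) (Fin N) ℤ) (hA : A.det ≠ 0)
    (B : Matrix (Fin N) (Fin N) ℂ) (hB : IsUnit B.det) (lam : Fin N → ℂ)
    (hdiag : A.map (Int.cast : ℤ → ℂ) = B * Matrix.diagonal lam * B⁻¹)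
    (rl rm : ℝ) (hlt : rm < rl) (hm0 : 0 < rm)
    (hmod : ∀ i, ‖lam i‖ = rl ∨ ‖lam i‖ = rm)
    (hex1 : ∃ i, ‖lam i‖ = rl) (hex2 : ∃ i, ‖lam i‖ = rm)
    (K : Type*) [Field K] [NumberField K] (P : Fin N → Kˣ) :
    uHeight K P ≤
      Filter.limsup (fun n : ℕ => uHeight K ((phi A)^[n] P) / rl ^ n) Filter.atTop +
      Filter.limsup
        (fun n : ℕ =>
          uHeight K ((phi (A.det.sign • A.adjugate))^[n] P) /
            (rl ^ ((Finset.univ.filter fun i => ‖lam i‖ = rl).card) *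
              rm ^ (N - (Finset.univ.filter fun i => ‖lam i‖ = rl).card - 1)) ^ n)
        Filter.atTop :=
  statement13_general A B hB lam hdiag rl rm hlt hm0 hmod hex2 K P
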